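/- arXiv:2008.00070 — 2 statements merged into one kernel-verified Lean document; each statement's English description precedes it below -/
import Mathlib

section
/- If L is a language over Σ with ε ∉ L and L·L ⊆ L (where product is concatenation of languages), and additionally L satisfies A·L = L·A for every language A over Σ, then L = ∅. -/
theorem commuting_no_eps_empty {α : Type*} (a b : α) (hab : a ≠ b)
    (L : Set (List α)) (hε : ([] : List α) ∉ L)
    (hsq : {w : List α | ∃ u ∈ L, ∃ v ∈ L, w = u ++ v} ⊆ L)
    (hcomm : ∀ A : Set (List α),
      {w : List α | ∃ u ∈ A, ∃ v ∈ L, w = u ++ v} =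
      {w : List α | ∃ u ∈ L, ∃ v ∈ A, w = u ++ v}) :
    L = ∅ := by
  ext w
  simp only [Set.mem_empty_iff_false, iff_false]
  intro hw
  have hwne : w ≠ [] := fun h => hε (h ▸ hw)
  have key : ∀ c : α, w.getLast? = some c := by
    intro c
    have h := hcomm {[c]}
    have hmem : (c :: w) ∈ {x | ∃ u ∈ ({[c]} : Set (List α)), ∃ v ∈ L, x = u ++ v} :=
      ⟨[c], rfl, w, hw, rfl⟩
    rw [h] at hmem
    obtain ⟨u, hu, v, hv, heq⟩ := hmem
    have hv2 : v = [c] := hv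
    subst hv2
    have h1 : (c :: w).getLast? = some c := by
      rw [heq]; exact List.getLast?_concat
    have h2 : (c :: w).getLast? = w.getLast? := by
      cases w with
      | nil => exact absurd rfl hwne
      | cons x xs => exact List.getLast?_cons_cons
    rw [h2] at h1
    exact h1
  have := (key a).symm.trans (key b)
  simp at this
  exact hab this
end

section
/- A language L over Σ satisfies L·A = A·L for all languages A and L·L = L if and only if L = {ε} or L = ∅. -/
theorem commuting_idempotent_iff {α : Type*} (a b : α) (hab : a ≠ b)
    (L : Set (List α)) :
    ((∀ A : Set (List α),
      {w : List α | ∃ u ∈ L, ∃ v ∈ A, w = u ++ v} =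
      {w : List α | ∃ u ∈ A, ∃ v ∈ L, w = u ++ v}) ∧
      {w : List α | ∃ u ∈ L, ∃ v ∈ L, w = u ++ v} = L) ↔
    (L = {([] : List α)} ∨ L = ∅) := by
  constructor
  · rintro ⟨hcomm, hidem⟩
    have hsub : L ⊆ {([] : List α)} := by
      intro u hu
      by_contra hne
      obtain ⟨x, xs, rfl⟩ : ∃ x xs, u = x :: xs := by
        cases u with
        | nil => exact absurd rfl hne
        | cons x xs => exact ⟨x, xs, rfl⟩
      have key : ∀ c : α, x = c := by
        intro c
        have h1 : (x :: xs) ++ [c] ∈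
            {w : List α | ∃ u ∈ L, ∃ v ∈ ({[c]} : Set (List α)), w = u ++ v} :=
          ⟨x :: xs, hu, [c], rfl, rfl⟩
        rw [hcomm ({[c]} : Set (List α))] at h1
        obtain ⟨u', hu', v, hv, heq⟩ := h1
        rw [Set.mem_singleton_iff] at hu'
        subst hu'
        simpa using congrArg List.head? heq
      exact hab ((key a).symm.trans (key b))
    rcases Set.subset_singleton_iff_eq.mp hsub with h | h
    · exact Or.inr h
    · exact Or.inl h
  · rintro (rfl | rfl)
    · constructor
      · intro A
        ext w
        constructor
        · rintro ⟨u, hu, v, hv, rfl⟩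
          rw [Set.mem_singleton_iff] at hu; subst hu
          exact ⟨v, hv, [], rfl, by simp⟩
        · rintro ⟨u, hu, v, hv, rfl⟩
          rw [Set.mem_singleton_iff] at hv; subst hv
          exact ⟨[], rfl, u, hu, by simp⟩
      · ext w
        constructor
        · rintro ⟨u, hu, v, hv, rfl⟩
          rw [Set.mem_singleton_iff] at hu hv; subst hu; subst hv; rfl
        · intro hw
          rw [Set.mem_singleton_iff] at hw; subst hw
          exact ⟨[], rfl, [], rfl, rfl⟩
    · constructor
      · intro A
        ext w
        simp
      · ext w
        simp
end
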